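/- arXiv:math/0110240 — 2 statements merged into one kernel-verified Lean document; each statement's English description precedes it below -/
import Mathlib

section
/- For every n ≥ 4, the number of order ideals I' of F₃(n) satisfying max ⋃ I' = n is at most 2^{n−4}. -/
set_option linter.unusedSectionVars false


/-- The 4-element set `{i, i+1, j, j+1}`, denoted `(i,j)` in the paper. -/
def pairSet (i j : ℕ) : Finset ℕ := {i, i + 1, j, j + 1}

/-- Membership in the collection `F₃(n)` of 4-element subsets of `{1,…,n}`
of the form `{i, i+1, j, j+1}` with `1 ≤ i`, `i+2 ≤ j`, `j+1 ≤ n`. -/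
def memF3 (n : ℕ) (f : Finset ℕ) : Prop :=
  ∃ i j : ℕ, 1 ≤ i ∧ i + 2 ≤ j ∧ j + 1 ≤ n ∧ f = pairSet i j

/-- The partial order `⪯` on finite subsets of `ℕ` of equal cardinality:
componentwise comparison of the increasingly sorted lists of elements. -/
def squeezedLE (f g : Finset ℕ) : Prop :=
  List.Forall₂ (· ≤ ·) (f.sort (· ≤ ·)) (g.sort (· ≤ ·))

/-- `I` is an order ideal of `F₃(n)` w.r.t. `⪯`. -/
def IsIdealF3 (n : ℕ) (I : Set (Finset ℕ)) : Prop :=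
  (∀ f ∈ I, memF3 n f) ∧
  ∀ f g : Finset ℕ, memF3 n f → g ∈ I → squeezedLE f g → f ∈ I

/-- `max ⋃ I`, the largest vertex used by the collection `I`. -/
noncomputable def maxVertex (I : Set (Finset ℕ)) : ℕ :=
  sSup (⋃ f ∈ I, (f : Set ℕ))

/-- `0 * K = {{0} ∪ f : f ∈ K}`. -/
def coneZero (K : Set (Finset ℕ)) : Set (Finset ℕ) := (insert 0) '' K

/-- A facet of the squeezed sphere `S(I)`: a 4-element set contained in
exactly one member of `I`. -/
def isFacetOfS (I : Set (Finset ℕ)) (F : Finset ℕ) : Prop :=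
  F.card = 4 ∧ ∃! g, g ∈ I ∧ F ⊆ g

/-- The gap of `(i,j) = {i, i+1, j, j+1}`, i.e. `j - i - 2`. -/
def gapOf (f : Finset ℕ) : ℕ :=
  f.sup id - (f.sort (· ≤ ·)).headI - 3

lemma pairSet_sort {i j : ℕ} (hij : i + 2 ≤ j) :
    (pairSet i j).sort (· ≤ ·) = [i, i+1, j, j+1] := by
  have h1 : pairSet i j = [i, i+1, j, j+1].toFinset := by
    ext x; simp [pairSet]
  have hnd : [i, i+1, j, j+1].Nodup := by
    simp; omega
  rw [h1, List.toFinset_sort (· ≤ ·) hnd]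
  simp [List.Pairwise, List.pairwise_cons]
  omega

lemma squeezedLE_pair {i j i' j' : ℕ} (hij : i + 2 ≤ j) (hij' : i' + 2 ≤ j') :
    squeezedLE (pairSet i j) (pairSet i' j') ↔ i ≤ i' ∧ j ≤ j' := by
  rw [squeezedLE, pairSet_sort hij, pairSet_sort hij']
  constructor
  · intro h
    rcases h with _ | ⟨h1, _ | ⟨h2, _ | ⟨h3, _⟩⟩⟩
    omega
  · rintro ⟨h1, h2⟩
    exact List.Forall₂.cons h1 (List.Forall₂.cons (by omega) (List.Forall₂.cons h2
      (List.Forall₂.cons (by omega) List.Forall₂.nil)))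

lemma pairSet_inj {i j i' j' : ℕ} (hij : i + 2 ≤ j) (hij' : i' + 2 ≤ j')
    (h : pairSet i j = pairSet i' j') : i = i' ∧ j = j' := by
  have := pairSet_sort hij
  rw [h, pairSet_sort hij'] at this
  simp at this; omega

/-- row maximum -/
noncomputable def Mrow (I : Set (Finset ℕ)) (j : ℕ) : ℕ :=
  sSup {i | 1 ≤ i ∧ i + 2 ≤ j ∧ pairSet i j ∈ I}

section Ideal

variable {n : ℕ} {I : Set (Finset ℕ)} (hn : 4 ≤ n) (hI : IsIdealF3 n I)
  (hmax : maxVertex I = n)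

include hn hI hmax

lemma base_mem : ∀ j, 3 ≤ j → j ≤ n - 1 → pairSet 1 j ∈ I := by
  -- first: n ∈ union
  have hbdd : ∀ x ∈ (⋃ f ∈ I, (f : Set ℕ)), x ≤ n := by
    intro x hx
    simp only [Set.mem_iUnion] at hx
    obtain ⟨f, hf, hxf⟩ := hx
    obtain ⟨i, j, hi, hij, hjn, rfl⟩ := hI.1 f hf
    simp [pairSet] at hxf
    rcases hxf with rfl | rfl | rfl | rfl <;> omega
  have hne : (⋃ f ∈ I, (f : Set ℕ)).Nonempty := by
    by_contra h
    rw [Set.not_nonempty_iff_eq_empty] at h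
    rw [maxVertex, h] at hmax
    simp at hmax
    omega
  have hmem : n ∈ (⋃ f ∈ I, (f : Set ℕ)) := by
    rw [← hmax, maxVertex]
    exact Nat.sSup_mem hne ⟨n, fun x hx => hbdd x hx⟩
  simp only [Set.mem_iUnion] at hmem
  obtain ⟨f, hf, hnf⟩ := hmem
  obtain ⟨i, j, hi, hij, hjn, rfl⟩ := hI.1 f hf
  have hj : j = n - 1 := by
    simp [pairSet] at hnf
    omega
  subst hj
  -- pairSet 1 (n-1) ∈ I
  have h1 : pairSet 1 (n - 1) ∈ I := by
    refine hI.2 _ _ ⟨1, n - 1, le_refl _, by omega, by omega, rfl⟩ hf ?_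
    rw [squeezedLE_pair (by omega) hij]
    omega
  intro j h3 hjn1
  refine hI.2 _ _ ⟨1, j, le_refl _, by omega, by omega, rfl⟩ h1 ?_
  rw [squeezedLE_pair (by omega) (by omega)]
  omega

lemma Mrow_spec {j : ℕ} (h3 : 3 ≤ j) (hjn : j ≤ n - 1) :
    1 ≤ Mrow I j ∧ Mrow I j + 2 ≤ j ∧ pairSet (Mrow I j) j ∈ I := by
  have hmem : Mrow I j ∈ {i | 1 ≤ i ∧ i + 2 ≤ j ∧ pairSet i j ∈ I} := by
    apply Nat.sSup_mem
    · exact ⟨1, le_refl _, by omega, base_mem hn hI hmax j h3 hjn⟩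
    · exact ⟨j, fun x hx => by obtain ⟨_, h2, _⟩ := hx; omega⟩
  exact ⟨hmem.1, hmem.2.1, hmem.2.2⟩

lemma mem_iff_le_Mrow {i j : ℕ} (hi : 1 ≤ i) (hij : i + 2 ≤ j) (hjn : j ≤ n - 1) :
    pairSet i j ∈ I ↔ i ≤ Mrow I j := by
  have h3 : 3 ≤ j := by omega
  obtain ⟨hM1, hM2, hM3⟩ := Mrow_spec hn hI hmax h3 hjn
  constructor
  · intro h
    exact le_csSup ⟨j, fun x hx => by obtain ⟨_, h2, _⟩ := hx; omega⟩ ⟨hi, hij, h⟩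
  · intro h
    refine hI.2 _ _ ⟨i, j, hi, hij, by omega, rfl⟩ hM3 ?_
    rw [squeezedLE_pair hij hM2]
    omega

lemma Mrow_step {j : ℕ} (h3 : 3 ≤ j) (hjn : j + 1 ≤ n - 1) :
    min (Mrow I (j+1)) (j - 2) ≤ Mrow I j := by
  obtain ⟨hM1, hM2, hM3⟩ := Mrow_spec hn hI hmax (by omega) hjn
  set i := min (Mrow I (j+1)) (j - 2) with hi
  have h1i : 1 ≤ i := by omega
  have hij : i + 2 ≤ j := by omega
  rw [← mem_iff_le_Mrow hn hI hmax h1i hij (by omega)]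
  refine hI.2 _ _ ⟨i, j, h1i, hij, by omega, rfl⟩ hM3 ?_
  rw [squeezedLE_pair hij hM2]
  omega

lemma Mrow_nonfull_mono {j j' : ℕ} (h3 : 3 ≤ j) (hjj : j ≤ j') (hjn : j' ≤ n - 1)
    (hnf : Mrow I j + 2 < j) : Mrow I j' ≤ Mrow I j ∧ Mrow I j' + 2 < j' := by
  induction j' with
  | zero => omega
  | succ k ih =>
    rcases Nat.lt_or_ge j (k+1) with hlt | hge
    · have hk := ih (by omega) (by omega)
      have hstep := Mrow_step hn hI hmax (by omega : 3 ≤ k) (by omega)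
      have hkk : Mrow I (k+1) ≤ Mrow I k := by
        rcases le_or_gt (Mrow I (k+1)) (Mrow I k) with h | h
        · exact h
        · exfalso
          have : min (Mrow I (k+1)) (k-2) = k - 2 ∨ min (Mrow I (k+1)) (k-2) = Mrow I (k+1) := by
            omega
          omega
      exact ⟨le_trans hkk hk.1, by omega⟩
    · have : j = k + 1 := by omega
      subst this
      exact ⟨le_refl _, hnf⟩

end Ideal

/-- The set of "non-full" rows. -/
noncomputable def NFset (n : ℕ) (I : Set (Finset ℕ)) : Finset ℕ :=
  (Finset.Icc 3 (n-1)).filter (fun j => Mrow I j + 2 < j)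

/-- The encoding of an ideal as a subset of `Icc 1 (n-4)`. -/
noncomputable def encodeI (n : ℕ) (I : Set (Finset ℕ)) : Finset ℕ :=
  (NFset n I).image (fun j => Mrow I j + (n - 1 - j))

section Ideal2

variable {n : ℕ} {I : Set (Finset ℕ)} (hn : 4 ≤ n) (hI : IsIdealF3 n I)
  (hmax : maxVertex I = n)

include hn hI hmax

lemma NF_mem_iff {j : ℕ} : j ∈ NFset n I ↔ 3 ≤ j ∧ j ≤ n - 1 ∧ Mrow I j + 2 < j := by
  simp [NFset, Finset.mem_filter, Finset.mem_Icc]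
  tauto

lemma NF_upclosed {j j' : ℕ} (hj : j ∈ NFset n I) (hjj : j ≤ j') (hjn : j' ≤ n - 1) :
    j' ∈ NFset n I := by
  rw [NF_mem_iff hn hI hmax] at hj ⊢
  obtain ⟨h3, _, hnf⟩ := hj
  exact ⟨by omega, hjn, (Mrow_nonfull_mono hn hI hmax h3 hjj hjn hnf).2⟩

lemma Aval_strictAnti {j j' : ℕ} (hj : j ∈ NFset n I) (hj' : j' ∈ NFset n I) (hjj : j < j') :
    Mrow I j' + (n - 1 - j') < Mrow I j + (n - 1 - j) := by
  rw [NF_mem_iff hn hI hmax] at hj hj'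
  have hmono := (Mrow_nonfull_mono hn hI hmax hj.1 (le_of_lt hjj) hj'.2.1 hj.2.2).1
  omega

lemma encode_card : (encodeI n I).card = (NFset n I).card := by
  apply Finset.card_image_of_injOn
  intro j hj j' hj' heq
  have heq2 : Mrow I j + (n - 1 - j) = Mrow I j' + (n - 1 - j') := heq
  by_contra hne
  rcases Nat.lt_or_ge j j' with h | h
  · have := Aval_strictAnti hn hI hmax hj hj' h; omega
  · have := Aval_strictAnti hn hI hmax hj' hj (by omega); omega

lemma encode_subset : encodeI n I ⊆ Finset.Icc 1 (n-4) := by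
  intro a ha
  rw [encodeI, Finset.mem_image] at ha
  obtain ⟨j, hj, rfl⟩ := ha
  rw [NF_mem_iff hn hI hmax] at hj
  have h1 := (Mrow_spec hn hI hmax hj.1 hj.2.1).1
  rw [Finset.mem_Icc]
  omega

lemma NF_card_le : (NFset n I).card ≤ n - 4 := by
  calc (NFset n I).card = (encodeI n I).card := (encode_card hn hI hmax).symm
  _ ≤ (Finset.Icc 1 (n-4)).card := Finset.card_le_card (encode_subset hn hI hmax)
  _ = n - 4 := by rw [Nat.card_Icc]; omega

lemma NF_eq_Ioc : NFset n I = Finset.Ioc (n - 1 - (NFset n I).card) (n - 1) := by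
  set L := (NFset n I).card with hL
  have hLn : L ≤ n - 4 := NF_card_le hn hI hmax
  apply Finset.eq_of_subset_of_card_le
  · intro j hj
    have hjm := (NF_mem_iff hn hI hmax).1 hj
    have hsub : Finset.Icc j (n-1) ⊆ NFset n I := by
      intro j' hj'
      rw [Finset.mem_Icc] at hj'
      exact NF_upclosed hn hI hmax hj hj'.1 hj'.2
    have := Finset.card_le_card hsub
    rw [Nat.card_Icc] at this
    rw [Finset.mem_Ioc]
    omega
  · rw [Nat.card_Ioc]
    omega

end Ideal2

lemma encode_injective {n : ℕ} {I I' : Set (Finset ℕ)} (hn : 4 ≤ n)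
    (hI : IsIdealF3 n I) (hmax : maxVertex I = n)
    (hI' : IsIdealF3 n I') (hmax' : maxVertex I' = n)
    (henc : encodeI n I = encodeI n I') : I = I' := by
  have hL : (NFset n I).card = (NFset n I').card := by
    rw [← encode_card hn hI hmax, ← encode_card hn hI' hmax', henc]
  have hNF : NFset n I = NFset n I' := by
    rw [NF_eq_Ioc hn hI hmax, NF_eq_Ioc hn hI' hmax', hL]
  -- A values agree, by strong induction
  have key : ∀ j, j ∈ NFset n I → Mrow I j + (n - 1 - j) = Mrow I' j + (n - 1 - j) := by
    intro j
    induction j using Nat.strong_induction_on with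
    | _ j ih =>
      intro hj
      -- helper: one-sided inequality
      have side : ∀ (J J' : Set (Finset ℕ)), IsIdealF3 n J → maxVertex J = n →
          IsIdealF3 n J' → maxVertex J' = n → NFset n J = NFset n J' →
          encodeI n J = encodeI n J' → j ∈ NFset n J →
          (∀ m, m < j → m ∈ NFset n J → Mrow J m + (n-1-m) = Mrow J' m + (n-1-m)) →
          Mrow J j + (n - 1 - j) ≤ Mrow J' j + (n - 1 - j) := by
        intro J J' hJ hmJ hJ' hmJ' hNFe hence hjJ ihe
        have hmem : Mrow J j + (n - 1 - j) ∈ encodeI n J' := by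
          rw [← hence, encodeI, Finset.mem_image]
          exact ⟨j, hjJ, rfl⟩
        rw [encodeI, Finset.mem_image] at hmem
        obtain ⟨j', hj', heq⟩ := hmem
        rcases Nat.lt_or_ge j' j with hlt | hge
        · -- contradiction: A J' j' = A J j' > A J j  but A J' j' = A J j
          exfalso
          have h1 := ihe j' hlt (hNFe ▸ hj')
          have h2 := Aval_strictAnti hn hJ hmJ (hNFe ▸ hj') hjJ hlt
          omega
        · rcases Nat.eq_or_lt_of_le hge with rfl | hlt
          · omega
          · have h2 := Aval_strictAnti hn hJ' hmJ' (hNFe ▸ hjJ) hj' hlt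
            omega
      have h1 := side I I' hI hmax hI' hmax' hNF henc hj (fun m hm hmem => ih m hm hmem)
      have h2 := side I' I hI' hmax' hI hmax hNF.symm henc.symm (hNF ▸ hj)
        (fun m hm hmem => (ih m hm (hNF ▸ hmem)).symm)
      omega
  -- Mrow agree on all rows
  have hM : ∀ j, 3 ≤ j → j ≤ n - 1 → Mrow I j = Mrow I' j := by
    intro j h3 hjn
    by_cases hnf : j ∈ NFset n I
    · have := key j hnf
      omega
    · have hfull : Mrow I j + 2 = j := by
        have := (Mrow_spec hn hI hmax h3 hjn).2.1
        rw [NF_mem_iff hn hI hmax] at hnf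
        omega
      have hfull' : Mrow I' j + 2 = j := by
        have := (Mrow_spec hn hI' hmax' h3 hjn).2.1
        rw [hNF] at hnf
        rw [NF_mem_iff hn hI' hmax'] at hnf
        omega
      omega
  -- conclude
  ext f
  constructor
  · intro hf
    obtain ⟨i, j, hi, hij, hjn, rfl⟩ := hI.1 f hf
    rw [mem_iff_le_Mrow hn hI hmax hi hij (by omega)] at hf
    rw [mem_iff_le_Mrow hn hI' hmax' hi hij (by omega), ← hM j (by omega) (by omega)]
    exact hf
  · intro hf
    obtain ⟨i, j, hi, hij, hjn, rfl⟩ := hI'.1 f hf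
    rw [mem_iff_le_Mrow hn hI' hmax' hi hij (by omega)] at hf
    rw [mem_iff_le_Mrow hn hI hmax hi hij (by omega), hM j (by omega) (by omega)]
    exact hf

/-- For every `n ≥ 4`, there are at most `2^(n-4)` order ideals `I'` of
`F₃(n)` with `max ⋃ I' = n`. -/
theorem count_order_ideals (n : ℕ) (hn : 4 ≤ n) :
    {I' : Set (Finset ℕ) | IsIdealF3 n I' ∧ maxVertex I' = n}.Finite ∧
    {I' : Set (Finset ℕ) | IsIdealF3 n I' ∧ maxVertex I' = n}.ncard ≤ 2 ^ (n - 4) := by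
  set s := {I' : Set (Finset ℕ) | IsIdealF3 n I' ∧ maxVertex I' = n} with hs
  set t : Set (Finset ℕ) := ↑((Finset.Icc 1 (n-4)).powerset) with ht
  have htfin : t.Finite := Finset.finite_toSet _
  have hmaps : ∀ I ∈ s, encodeI n I ∈ t := by
    intro I hI
    rw [ht, Finset.coe_powerset]
    simp only [Set.mem_preimage, Set.mem_powerset_iff, Finset.coe_subset]
    exact encode_subset hn hI.1 hI.2
  have hinj : Set.InjOn (encodeI n) s := by
    intro I hI I' hI' h
    exact encode_injective hn hI.1 hI.2 hI'.1 hI'.2 h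
  have hfin : s.Finite := by
    apply Set.Finite.of_finite_image _ hinj
    exact htfin.subset (by rintro x ⟨I, hI, rfl⟩; exact hmaps I hI)
  refine ⟨hfin, ?_⟩
  calc s.ncard ≤ t.ncard := Set.ncard_le_ncard_of_injOn _ hmaps hinj htfin
  _ = 2 ^ (n - 4) := by
    rw [ht, Set.ncard_coe_finset, Finset.card_powerset, Nat.card_Icc]
    norm_num
end

section
/- Let n ≥ 4 and let A ⊆ F₃(n) be an antichain with respect to ⪯ (i.e. any two distinct elements of A are ⪯-incomparable). Then any two distinct elements of A have gaps differing by at least 2, and consequently the cardinality of A is at most ⌈(n−3)/2⌉. -/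
/-!
Sorting `(i,j) = {i, i+1, j, j+1}` gives `[i, i+1, j, j+1]`, so `(i,j) ⪯ (i',j')` iff `i ≤ i'` and
`j ≤ j'`. Hence two incomparable pairs satisfy (up to symmetry) `i < i'` and `j' < j`, and their
gaps `j - i - 2` and `j' - i' - 2` differ by at least 2. Gaps lie in `[0, n - 4]`, and a set of
naturals below `n - 3` that are pairwise at least 2 apart has at most `⌈(n - 3)/2⌉` elements,
since halving them is injective.
-/

lemma sort_pairSet {i j : ℕ} (h : i + 2 ≤ j) :
    (pairSet i j).sort (· ≤ ·) = [i, i + 1, j, j + 1] := by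
  have hlist : pairSet i j = [i, i + 1, j, j + 1].toFinset := by
    ext x; simp [pairSet]
  rw [hlist, List.toFinset_sort]
  · simp; omega
  · simp; omega

lemma gapOf_pairSet {i j : ℕ} (h : i + 2 ≤ j) : gapOf (pairSet i j) = j - i - 2 := by
  have hmax : (pairSet i j).sup id = j + 1 := by
    simp [pairSet]; omega
  rw [gapOf, hmax, sort_pairSet h]
  simp; omega

lemma squeezedLE_pairSet_iff {i j i' j' : ℕ} (h : i + 2 ≤ j) (h' : i' + 2 ≤ j') :
    squeezedLE (pairSet i j) (pairSet i' j') ↔ i ≤ i' ∧ j ≤ j' := by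
  rw [squeezedLE, sort_pairSet h, sort_pairSet h']
  constructor
  · rintro (_ | ⟨hi, _ | ⟨-, _ | ⟨hj, -⟩⟩⟩)
    exact ⟨hi, hj⟩
  · rintro ⟨hi, hj⟩
    exact .cons hi (.cons (by omega) (.cons hj (.cons (by omega) .nil)))

lemma gapOf_separated_of_incomparable {i j i' j' : ℕ} (h : i + 2 ≤ j) (h' : i' + 2 ≤ j')
    (hle : ¬ squeezedLE (pairSet i j) (pairSet i' j'))
    (hge : ¬ squeezedLE (pairSet i' j') (pairSet i j)) :
    gapOf (pairSet i j) + 2 ≤ gapOf (pairSet i' j') ∨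
      gapOf (pairSet i' j') + 2 ≤ gapOf (pairSet i j) := by
  rw [squeezedLE_pairSet_iff h h'] at hle
  rw [squeezedLE_pairSet_iff h' h] at hge
  rw [gapOf_pairSet h, gapOf_pairSet h']
  omega

lemma gapOf_lt_of_memF3 {n : ℕ} {f : Finset ℕ} (hf : memF3 n f) : gapOf f < n - 3 := by
  obtain ⟨i, j, hi, hij, hjn, rfl⟩ := hf
  rw [gapOf_pairSet hij]
  omega

lemma Set.ncard_le_of_separated {α : Type*} {s : Set α} {g : α → ℕ} {N : ℕ}
    (hlt : ∀ a ∈ s, g a < N)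
    (hsep : ∀ a ∈ s, ∀ b ∈ s, a ≠ b → g a + 2 ≤ g b ∨ g b + 2 ≤ g a) :
    s.ncard ≤ (N + 1) / 2 := by
  have hinj : Set.InjOn (fun a => g a / 2) s := by
    intro a ha b hb hab
    by_contra hne
    rcases hsep a ha b hb hne with h | h <;> simp only at hab <;> omega
  calc s.ncard ≤ (Finset.range ((N + 1) / 2) : Set ℕ).ncard :=
        Set.ncard_le_ncard_of_injOn _ (fun a ha => by simp; have := hlt a ha; omega) hinj
    _ = (N + 1) / 2 := by rw [Set.ncard_coe_finset, Finset.card_range]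

theorem antichain_gap_and_size_general (n : ℕ) (A : Set (Finset ℕ))
    (hA : ∀ f ∈ A, memF3 n f)
    (hanti : ∀ f ∈ A, ∀ g ∈ A, f ≠ g → ¬ squeezedLE f g) :
    (∀ f ∈ A, ∀ g ∈ A, f ≠ g →
      gapOf f + 2 ≤ gapOf g ∨ gapOf g + 2 ≤ gapOf f) ∧
    A.ncard ≤ (n - 3 + 1) / 2 := by
  have hsep : ∀ f ∈ A, ∀ g ∈ A, f ≠ g → gapOf f + 2 ≤ gapOf g ∨ gapOf g + 2 ≤ gapOf f := by
    intro f hf g hg hne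
    have hle := hanti f hf g hg hne
    have hge := hanti g hg f hf hne.symm
    obtain ⟨i, j, -, hij, -, rfl⟩ := hA f hf
    obtain ⟨i', j', -, hij', -, rfl⟩ := hA g hg
    exact gapOf_separated_of_incomparable hij hij' hle hge
  exact ⟨hsep, Set.ncard_le_of_separated (fun f hf => gapOf_lt_of_memF3 (hA f hf)) hsep⟩

/-- In a `⪯`-antichain `A ⊆ F₃(n)`, any two distinct elements have gaps
differing by at least 2, and hence `#A ≤ ⌈(n-3)/2⌉`. -/
theorem antichain_gap_and_size (n : ℕ) (hn : 4 ≤ n) (A : Set (Finset ℕ))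
    (hA : ∀ f ∈ A, memF3 n f)
    (hanti : ∀ f ∈ A, ∀ g ∈ A, f ≠ g → ¬ squeezedLE f g) :
    (∀ f ∈ A, ∀ g ∈ A, f ≠ g →
      gapOf f + 2 ≤ gapOf g ∨ gapOf g + 2 ≤ gapOf f) ∧
    A.ncard ≤ (n - 3 + 1) / 2 :=
  antichain_gap_and_size_general n A hA hanti
end
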